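/- arXiv:2104.13138 — 3 statements merged into one kernel-verified Lean document; each statement's English description precedes it below -/
import Mathlib

section
/- Every recursive measure on proofs is invariant under tree unraveling: if P is a proof for T ⊨ η and P_T is its unraveling into a tree starting at the sink, then m(P) = m(P_T). -/
/-!
Sending a path to its starting vertex is a fibration from the unraveling onto `P`: it preserves
labels and maps the incoming hyperedge of each path bijectively onto the incoming hyperedge of
its starting vertex. A fibration between proofs restricts to a fibration between corresponding
subproofs, and a recursive measure only looks at labels and incoming hyperedges, so by induction
on the number of vertices it takes the same value on both ends of any fibration between proofs.
-/

/-- A (finite, directed, labeled) hypergraph: vertices, hyperedges `(S,d)` with a finite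
source set `S` and target `d`, and a vertex labeling function. -/
structure ProofHypergraph (V : Type) (L : Type) where
  verts : Set V
  edges : Set (Finset V × V)
  labl : V → L

namespace ProofHypergraph

variable {V L : Type}

/-- Every hyperedge has its sources and target among the vertices. -/
def WellFormed (H : ProofHypergraph V L) : Prop :=
  ∀ e ∈ H.edges, (e.1 : Set V) ⊆ H.verts ∧ e.2 ∈ H.verts

/-- One step along a hyperedge: `u` is a source of a hyperedge with target `w`. -/
def Step (H : ProofHypergraph V L) (u w : V) : Prop :=
  ∃ S : Finset V, (S, w) ∈ H.edges ∧ u ∈ S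

/-- A path, represented by its (nonempty) list of vertices `d₀, d₁, …, d_q`;
its length is `q = p.length - 1`. -/
def IsPathList (H : ProofHypergraph V L) (p : List V) : Prop :=
  p ≠ [] ∧ p.Chain' H.Step ∧ ∀ x ∈ p, x ∈ H.verts

/-- `u` reaches `w` via a path of positive length. -/
def Reaches (H : ProofHypergraph V L) (u w : V) : Prop :=
  ∃ p : List V, H.IsPathList p ∧ p.head? = some u ∧ p.getLast? = some w ∧ 2 ≤ p.length

/-- Acyclic: no path of positive length from a vertex to itself. -/
def Acyclic (H : ProofHypergraph V L) : Prop := ∀ u : V, ¬ H.Reaches u u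

/-- A sink: a vertex occurring in the source set of no hyperedge. -/
def IsSink (H : ProofHypergraph V L) (s : V) : Prop :=
  s ∈ H.verts ∧ ∀ e ∈ H.edges, s ∉ e.1

/-- A leaf: a vertex with no incoming hyperedge. -/
def IsLeaf (H : ProofHypergraph V L) (w : V) : Prop :=
  w ∈ H.verts ∧ ∀ e ∈ H.edges, e.2 ≠ w

/-- Every vertex has at most one incoming hyperedge. -/
def AtMostOneIn (H : ProofHypergraph V L) : Prop :=
  ∀ S₁ S₂ : Finset V, ∀ d : V, (S₁, d) ∈ H.edges → (S₂, d) ∈ H.edges → S₁ = S₂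

/-- A (structural) proof with sink `v`: a finite, well-formed, acyclic hypergraph with
at most one incoming hyperedge per vertex and exactly one sink, namely `v`. -/
def IsProofOf (H : ProofHypergraph V L) (v : V) : Prop :=
  H.WellFormed ∧ H.verts.Finite ∧ H.Acyclic ∧ H.AtMostOneIn ∧
  H.IsSink v ∧ ∀ w : V, H.IsSink w → w = v

/-- A proof for `T ⊨ η` w.r.t. a consequence relation `ent`: a grounded
(leaves labeled by theory sentences) and sound (each hyperedge is a valid inference)
proof whose unique sink `v` is labeled `η`. -/
def IsProofFor (ent : Set L → L → Prop) (T : Set L) (η : L)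
    (H : ProofHypergraph V L) (v : V) : Prop :=
  H.IsProofOf v ∧ H.labl v = η ∧
  (∀ w : V, H.IsLeaf w → H.labl w ∈ T) ∧
  ∀ e ∈ H.edges, ent (H.labl '' (e.1 : Set V)) (H.labl e.2)

/-- Subgraph relation. -/
def IsSubgraph (H' H : ProofHypergraph V L) : Prop :=
  H'.verts ⊆ H.verts ∧ H'.edges ⊆ H.edges ∧ H'.labl = H.labl

/-- The subproof of `H` with sink `v`: the restriction of `H` to `v` together with all
vertices having a path to `v`, with all hyperedges of `H` among those vertices. -/
def subproofAt (H : ProofHypergraph V L) (v : V) : ProofHypergraph V L where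
  verts := {w | w ∈ H.verts ∧ (w = v ∨ H.Reaches w v)}
  edges := {e | e ∈ H.edges ∧ (e.2 = v ∨ H.Reaches e.2 v)}
  labl := H.labl

end ProofHypergraph

namespace ProofHypergraph

/-- A measure `m` on hypergraphs (meant to be applied to proofs) is *recursive* with
leaf function `leafm` and edge function `edgem` if, on every proof, it satisfies the
recursive equations: the value of a single-vertex proof is given by `leafm` applied to
its label, and the value of a proof whose sink has incoming hyperedge `(S,v)` is given
by `edgem` applied to the labels of the hyperedge and the multiset of values of the
direct subproofs. -/
def RecursiveOn {V L : Type} [DecidableEq L] (m : ProofHypergraph V L → NNRat)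
    (leafm : L → NNRat) (edgem : Finset L × L → Multiset NNRat → NNRat) : Prop :=
  ∀ (H : ProofHypergraph V L) (v : V), H.IsProofOf v →
    ((H.verts = {v} ∧ H.edges = ∅) → m H = leafm (H.labl v)) ∧
    ∀ S : Finset V, (S, v) ∈ H.edges →
      m H = edgem (S.image H.labl, H.labl v) (S.val.map fun w => m (H.subproofAt w))

/-- Monotonicity of an edge function: replacing an element `q` of the multiset argument
by some `q' ≤ q` does not increase the value. -/
def MonotoneEdge {L : Type} (edgem : Finset L × L → Multiset NNRat → NNRat) : Prop :=
  ∀ (lab : Finset L × L) (Q : Multiset NNRat) (q q' : NNRat),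
    q ∈ Q → q' ≤ q → edgem lab (q' ::ₘ Q.erase q) ≤ edgem lab Q

end ProofHypergraph

namespace ProofHypergraph

/-- The unraveling of a hypergraph `H` at a vertex `v`: vertices are the paths of `H`
ending in `v` (the path `[v]` of length 0 represents `v` itself); there is a hyperedge
from the set of one-step extensions `{d' :: p | d' ∈ S}` to `p` whenever `(S, d)` is a
hyperedge of `H` into the first vertex `d` of `p`; labels are inherited from the
starting vertices of paths. -/
def unravel {V L : Type} [DecidableEq V] (H : ProofHypergraph V L) (v : V) :
    ProofHypergraph (List V) L where
  verts := {p | H.IsPathList p ∧ p.getLast? = some v}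
  edges := {e | ∃ (d : V) (ps : List V) (S : Finset V),
      H.IsPathList (d :: ps) ∧ (d :: ps).getLast? = some v ∧ (S, d) ∈ H.edges ∧
      e = (S.image (fun u => u :: d :: ps), d :: ps)}
  labl := fun p => H.labl (p.headD v)

end ProofHypergraph

theorem List.finite_nodup_of_forall_mem {α : Type*} {s : Set α} (hs : s.Finite) :
    {l : List α | l.Nodup ∧ ∀ x ∈ l, x ∈ s}.Finite := by
  have : Fintype s := hs.fintype
  refine ((List.finite_length_le s (Fintype.card s)).image (List.map (↑))).subset ?_
  rintro l ⟨hnd, hl⟩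
  lift l to List s using hl
  exact ⟨l, (List.Nodup.of_map _ hnd).length_le_card, rfl⟩

namespace ProofHypergraph

open Relation

variable {V W L : Type}

section Reachability

variable {H : ProofHypergraph V L} {u w : V}

theorem Step.mem_verts (hH : H.WellFormed) (h : H.Step u w) : u ∈ H.verts ∧ w ∈ H.verts := by
  obtain ⟨S, hS, hu⟩ := h
  exact ⟨(hH _ hS).1 hu, (hH _ hS).2⟩

theorem Reaches.transGen (h : H.Reaches u w) : TransGen H.Step u w := by
  obtain ⟨_ | ⟨a, _ | ⟨b, l⟩⟩, ⟨-, hch, -⟩, hh, hl, hlen⟩ := h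
  · simp at hlen
  · simp at hlen
  obtain rfl : a = u := by simpa using hh
  obtain ⟨hab, hbl⟩ := List.isChain_cons_cons.mp hch
  exact TransGen.head' hab <| List.relationReflTransGen_of_exists_isChain_cons l hbl <| by
    simpa [List.getLast?_eq_some_getLast] using hl

theorem Reaches.mono {H' : ProofHypergraph V L} (hv : H'.verts ⊆ H.verts)
    (he : H'.edges ⊆ H.edges) (h : H'.Reaches u w) : H.Reaches u w := by
  obtain ⟨p, ⟨hne, hch, hp⟩, hh, hl, hlen⟩ := h
  exact ⟨p, ⟨hne, List.IsChain.imp (fun _ _ ⟨S, hS, ha⟩ => ⟨S, he hS, ha⟩) hch,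
    fun x hx => hv (hp x hx)⟩, hh, hl, hlen⟩

theorem reaches_iff_transGen (hH : H.WellFormed) : H.Reaches u w ↔ TransGen H.Step u w := by
  refine ⟨Reaches.transGen, fun h => ?_⟩
  obtain ⟨b, hub, hbw⟩ := TransGen.head'_iff.mp h
  obtain ⟨l, hch, hl⟩ := List.exists_isChain_cons_of_relationReflTransGen hbw
  have hverts : ∀ x ∈ b :: l, x ∈ H.verts :=
    hch.induction _ _ (fun _ _ hs _ => (hs.mem_verts hH).2) fun _ => (hub.mem_verts hH).2
  refine ⟨u :: b :: l, ⟨List.cons_ne_nil _ _, hch.cons_cons hub, ?_⟩, rfl, ?_, by simp⟩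
  · simpa [(hub.mem_verts hH).1] using hverts
  · rw [List.getLast?_cons_cons, List.getLast?_eq_some_getLast (List.cons_ne_nil _ _), hl]

theorem Acyclic.not_transGen (hH : H.WellFormed) (hac : H.Acyclic) (u : V) :
    ¬TransGen H.Step u u :=
  fun h => hac u ((reaches_iff_transGen hH).2 h)

theorem eq_or_reaches_iff (hH : H.WellFormed) :
    (u = w ∨ H.Reaches u w) ↔ ReflTransGen H.Step u w := by
  rw [reflTransGen_iff_eq_or_transGen, reaches_iff_transGen hH, eq_comm]

theorem subproofAt_verts_subset : (H.subproofAt w).verts ⊆ H.verts := fun _ hx => hx.1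

theorem subproofAt_edges_subset : (H.subproofAt w).edges ⊆ H.edges := fun _ he => he.1

theorem mem_subproofAt_verts (hH : H.WellFormed) {x : V} :
    x ∈ (H.subproofAt w).verts ↔ x ∈ H.verts ∧ ReflTransGen H.Step x w :=
  and_congr_right' (eq_or_reaches_iff hH)

theorem mem_subproofAt_edges (hH : H.WellFormed) {e : Finset V × V} :
    e ∈ (H.subproofAt w).edges ↔ e ∈ H.edges ∧ ReflTransGen H.Step e.2 w :=
  and_congr_right' (eq_or_reaches_iff hH)

end Reachability

section Paths

variable {P : ProofHypergraph V L}

theorem IsPathList.cons {d x : V} {ps : List V} {S : Finset V} (hp : P.IsPathList (d :: ps))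
    (hS : (S, d) ∈ P.edges) (hx : x ∈ S) (hxv : x ∈ P.verts) : P.IsPathList (x :: d :: ps) :=
  ⟨List.cons_ne_nil _ _, List.IsChain.cons_cons ⟨S, hS, hx⟩ hp.2.1, by simpa [hxv] using hp.2.2⟩

theorem IsPathList.of_cons {x : V} {p : List V} (hp : P.IsPathList (x :: p)) (hne : p ≠ []) :
    P.IsPathList p :=
  ⟨hne, List.IsChain.tail hp.2.1, fun y hy => hp.2.2 y (List.mem_cons_of_mem x hy)⟩

theorem IsPathList.nodup (hP : P.WellFormed) (hac : P.Acyclic) {p : List V}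
    (hp : P.IsPathList p) : p.Nodup :=
  (List.isChain_iff_pairwise.mp (List.IsChain.imp (fun _ _ => TransGen.single) hp.2.1)).imp
    (S := (· ≠ ·)) fun hab heq => hac.not_transGen hP _ (heq ▸ hab)

theorem setOf_isPathList_finite (hP : P.WellFormed) (hfin : P.verts.Finite) (hac : P.Acyclic) :
    {p | P.IsPathList p}.Finite :=
  (List.finite_nodup_of_forall_mem hfin).subset fun _ hp => ⟨hp.nodup hP hac, hp.2.2⟩

end Paths

section Proofs

variable {H : ProofHypergraph V L} {u w : V}

theorem IsProofOf.mem_verts (hH : H.IsProofOf u) : u ∈ H.verts := hH.2.2.2.2.1.1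

theorem IsProofOf.reflTransGen_sink (hH : H.IsProofOf u) (hw : w ∈ H.verts) :
    ReflTransGen H.Step w u := by
  obtain ⟨hwf, hfin, hac, -, -, huniq⟩ := hH
  let _ : IsStrictOrder V (flip (TransGen H.Step)) :=
    { irrefl := hac.not_transGen hwf, trans := fun _ _ _ hab hbc => hbc.trans hab }
  refine (hfin.wellFoundedOn (r := flip (TransGen H.Step))).induction hw
    (P := fun x => ReflTransGen H.Step x u) fun x hx ih => ?_
  by_cases hs : H.IsSink x
  · rw [huniq x hs]
  · obtain ⟨⟨S, y⟩, he, hxS⟩ : ∃ e ∈ H.edges, x ∈ e.1 := by simpa [IsSink, hx] using hs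
    have hstep : H.Step x y := ⟨S, he, hxS⟩
    exact ReflTransGen.head hstep (ih y (hwf _ he).2 (TransGen.single hstep))

theorem IsProofOf.eq_singleton_or_exists_edge (hH : H.IsProofOf u) :
    (H.verts = {u} ∧ H.edges = ∅) ∨ ∃ S, (S, u) ∈ H.edges := by
  refine or_iff_not_imp_right.mpr fun hno => ?_
  have hone : ∀ w ∈ H.verts, w = u := fun w hw => by
    rcases (hH.reflTransGen_sink hw).cases_tail with rfl | ⟨y, -, S, hS, -⟩
    · rfl
    · exact absurd ⟨S, hS⟩ hno
  refine ⟨Set.eq_singleton_iff_unique_mem.mpr ⟨hH.mem_verts, hone⟩,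
    Set.eq_empty_iff_forall_notMem.mpr fun ⟨S, d⟩ he => hno ⟨S, ?_⟩⟩
  rwa [← hone d (hH.1 _ he).2]

theorem IsProofOf.subproofAt (hH : H.IsProofOf u) (hw : w ∈ H.verts) :
    (H.subproofAt w).IsProofOf w := by
  obtain ⟨hwf, hfin, hac, hone, -, -⟩ := hH
  refine ⟨?_, hfin.subset subproofAt_verts_subset, ?_, fun S₁ S₂ d h₁ h₂ =>
    hone S₁ S₂ d h₁.1 h₂.1, ⟨(mem_subproofAt_verts hwf).2 ⟨hw, .refl⟩, ?_⟩, ?_⟩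
  · rintro ⟨S, d⟩ he
    obtain ⟨he, hdw⟩ := (mem_subproofAt_edges hwf).1 he
    refine ⟨fun x hx => (mem_subproofAt_verts hwf).2 ⟨(hwf _ he).1 hx, hdw.head ⟨S, he, hx⟩⟩,
      (mem_subproofAt_verts hwf).2 ⟨(hwf _ he).2, hdw⟩⟩
  · exact fun x hx => hac x (hx.mono subproofAt_verts_subset subproofAt_edges_subset)
  · rintro ⟨S, d⟩ he hwS
    obtain ⟨he, hdw⟩ := (mem_subproofAt_edges hwf).1 he
    exact hac.not_transGen hwf w (TransGen.head' ⟨S, he, hwS⟩ hdw)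
  · rintro x ⟨hx, hsink⟩
    obtain ⟨hx, hxw⟩ := (mem_subproofAt_verts hwf).1 hx
    rcases hxw.cases_head with rfl | ⟨y, ⟨S, hS, hxS⟩, hyw⟩
    · rfl
    · exact absurd hxS (hsink (S, y) ((mem_subproofAt_edges hwf).2 ⟨hS, hyw⟩))

theorem IsProofOf.ncard_subproofAt_lt (hH : H.IsProofOf u) {S : Finset V}
    (hS : (S, u) ∈ H.edges) (hw : w ∈ S) : (H.subproofAt w).verts.ncard < H.verts.ncard := by
  obtain ⟨hwf, hfin, hac, -, ⟨hu, -⟩, -⟩ := hH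
  refine Set.ncard_lt_ncard ⟨subproofAt_verts_subset, fun hsub => ?_⟩ hfin
  obtain ⟨-, huw⟩ := (mem_subproofAt_verts hwf).1 (hsub hu)
  exact hac.not_transGen hwf u (TransGen.tail' huw ⟨S, hS, hw⟩)

end Proofs

/-- A graph fibration in the sense of Boldi and Vigna: the incoming hyperedge of every vertex `x`
of `K` maps bijectively onto the incoming hyperedge of `φ x` in `H`. -/
structure IsFibration [DecidableEq V] (φ : W → V) (K : ProofHypergraph W L)
    (H : ProofHypergraph V L) : Prop where
  mapsTo : Set.MapsTo φ K.verts H.verts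
  labl_apply : ∀ x ∈ K.verts, H.labl (φ x) = K.labl x
  image_mem_edges : ∀ S x, (S, x) ∈ K.edges → (S.image φ, φ x) ∈ H.edges
  injOn_sources : ∀ S x, (S, x) ∈ K.edges → Set.InjOn φ S
  exists_edge_of_mem_edges : ∀ x ∈ K.verts, ∀ S, (S, φ x) ∈ H.edges → ∃ S', (S', x) ∈ K.edges

namespace IsFibration

variable [DecidableEq V] {φ : W → V} {K : ProofHypergraph W L} {H : ProofHypergraph V L}

theorem reflTransGen (hφ : IsFibration φ K H) {a b : W} (h : ReflTransGen K.Step a b) :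
    ReflTransGen H.Step (φ a) (φ b) :=
  h.lift φ fun _ _ ⟨S, hS, ha⟩ =>
    ⟨S.image φ, hφ.image_mem_edges _ _ hS, Finset.mem_image_of_mem φ ha⟩

theorem subproofAt (hφ : IsFibration φ K H) (hK : K.WellFormed) (hH : H.WellFormed) (x : W) :
    IsFibration φ (K.subproofAt x) (H.subproofAt (φ x)) where
  mapsTo y hy := by
    obtain ⟨hy, hyx⟩ := (mem_subproofAt_verts hK).1 hy
    exact (mem_subproofAt_verts hH).2 ⟨hφ.mapsTo hy, hφ.reflTransGen hyx⟩
  labl_apply y hy := hφ.labl_apply y (subproofAt_verts_subset hy)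
  image_mem_edges S y he := by
    obtain ⟨he, hyx⟩ := (mem_subproofAt_edges hK).1 he
    exact (mem_subproofAt_edges hH).2 ⟨hφ.image_mem_edges S y he, hφ.reflTransGen hyx⟩
  injOn_sources S y he := hφ.injOn_sources S y (subproofAt_edges_subset he)
  exists_edge_of_mem_edges y hy S he := by
    obtain ⟨hy, hyx⟩ := (mem_subproofAt_verts hK).1 hy
    obtain ⟨S', hS'⟩ := hφ.exists_edge_of_mem_edges y hy S (subproofAt_edges_subset he)
    exact ⟨S', (mem_subproofAt_edges hK).2 ⟨hS', hyx⟩⟩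

end IsFibration

theorem RecursiveOn.eq_of_isFibration [DecidableEq V] [DecidableEq L] {leafm : L → ℚ≥0}
    {edgem : Finset L × L → Multiset ℚ≥0 → ℚ≥0} {mK : ProofHypergraph W L → ℚ≥0}
    {mH : ProofHypergraph V L → ℚ≥0} (hmK : RecursiveOn mK leafm edgem)
    (hmH : RecursiveOn mH leafm edgem) {K : ProofHypergraph W L} {H : ProofHypergraph V L}
    {φ : W → V} {k : W} (hK : K.IsProofOf k) (hH : H.IsProofOf (φ k))
    (hφ : IsFibration φ K H) : mK K = mH H := by
  induction hn : K.verts.ncard using Nat.strong_induction_on generalizing K H k with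
  | _ n ih =>
  have hk : k ∈ K.verts := hK.mem_verts
  rcases hK.eq_singleton_or_exists_edge with ⟨hV, hE⟩ | ⟨S, hS⟩
  · have hHleaf : H.verts = {φ k} ∧ H.edges = ∅ := by
      refine hH.eq_singleton_or_exists_edge.resolve_right fun ⟨S, hS⟩ => ?_
      obtain ⟨S', hS'⟩ := hφ.exists_edge_of_mem_edges k hk S hS
      simp [hE] at hS'
    rw [(hmK K k hK).1 ⟨hV, hE⟩, (hmH H _ hH).1 hHleaf, hφ.labl_apply k hk]
  · have hSK : ∀ x ∈ S, x ∈ K.verts := fun x hx => (hK.1 _ hS).1 hx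
    rw [(hmK K k hK).2 S hS, (hmH H _ hH).2 _ (hφ.image_mem_edges S k hS), Finset.image_image,
      Finset.image_val_of_injOn (hφ.injOn_sources S k hS), Multiset.map_map,
      hφ.labl_apply k hk]
    congr 1
    · exact congrArg (·, _) (Finset.image_congr fun x hx => (hφ.labl_apply x (hSK x hx)).symm)
    · refine Multiset.map_congr rfl fun x hx => ?_
      exact ih _ (hn ▸ hK.ncard_subproofAt_lt hS hx) (hK.subproofAt (hSK x hx))
        (hH.subproofAt (hφ.mapsTo (hSK x hx))) (hφ.subproofAt hK.1 hH.1 x) rfl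

section Unravel

variable [DecidableEq V] {P : ProofHypergraph V L} {v : V}

theorem unravel_step_eq_cons {q q' : List V} (h : (P.unravel v).Step q' q) :
    ∃ x, q' = x :: q := by
  obtain ⟨_, ⟨d, ps, S, -, -, -, he⟩, hq'⟩ := h
  obtain ⟨rfl, rfl⟩ := Prod.mk.inj he
  obtain ⟨x, -, rfl⟩ := Finset.mem_image.mp hq'
  exact ⟨x, rfl⟩

theorem unravel_wellFormed (hP : P.WellFormed) : (P.unravel v).WellFormed := by
  rintro _ ⟨d, ps, S, hp, hl, hS, rfl⟩
  refine ⟨fun q hq => ?_, hp, hl⟩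
  obtain ⟨x, hx, rfl⟩ := Finset.mem_image.mp hq
  exact ⟨hp.cons hS hx ((hP _ hS).1 hx), by rwa [List.getLast?_cons_cons]⟩

theorem unravel_acyclic : (P.unravel v).Acyclic := fun q hq => by
  have hlt := hq.transGen.lift List.length (p := (· > ·)) fun _ _ h => by
    obtain ⟨x, rfl⟩ := unravel_step_eq_cons h
    exact Nat.lt_succ_self _
  rw [transGen_eq_self] at hlt
  exact lt_irrefl _ hlt

theorem unravel_atMostOneIn (hP : P.AtMostOneIn) : (P.unravel v).AtMostOneIn := by
  rintro _ _ _ ⟨d₁, ps₁, S₁, -, -, h₁, he₁⟩ ⟨d₂, ps₂, S₂, -, -, h₂, he₂⟩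
  obtain ⟨rfl, rfl⟩ := Prod.mk.inj he₁
  obtain ⟨rfl, hq⟩ := Prod.mk.inj he₂
  obtain ⟨rfl, rfl⟩ := List.cons_eq_cons.mp hq
  rw [hP _ _ _ h₁ h₂]

theorem unravel_isProofOf (hP : P.IsProofOf v) : (P.unravel v).IsProofOf [v] := by
  obtain ⟨hwf, hfin, hac, hone, ⟨hv, -⟩, -⟩ := hP
  refine ⟨unravel_wellFormed hwf, (setOf_isPathList_finite hwf hfin hac).subset fun _ hp => hp.1,
    unravel_acyclic, unravel_atMostOneIn hone, ⟨⟨⟨List.cons_ne_nil _ _, List.isChain_singleton v,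
    by simpa using hv⟩, rfl⟩, ?_⟩, ?_⟩
  · rintro _ ⟨d, ps, S, -, -, -, rfl⟩ hvS
    simp at hvS
  · rintro (_ | ⟨d, _ | ⟨d', ps⟩⟩) ⟨⟨hp, hl⟩, hsink⟩
    · exact absurd rfl hp.1
    · simpa using hl
    · obtain ⟨S, hS, hdS⟩ := (List.isChain_cons_cons.mp hp.2.1).1
      exact absurd (Finset.mem_image_of_mem _ hdS) (hsink _
        ⟨d', ps, S, hp.of_cons (List.cons_ne_nil _ _), by simpa using hl, hS, rfl⟩)

theorem isFibration_headD_unravel : IsFibration (fun p => p.headD v) (P.unravel v) P where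
  mapsTo := by
    rintro (_ | ⟨d, ps⟩) ⟨hp, -⟩
    · exact absurd rfl hp.1
    · exact hp.2.2 d List.mem_cons_self
  labl_apply _ _ := rfl
  image_mem_edges := by
    rintro _ _ ⟨d, ps, S, -, -, hS, he⟩
    obtain ⟨rfl, rfl⟩ := Prod.mk.inj he
    simpa only [Finset.image_image, Function.comp_def, List.headD_cons, Finset.image_id'] using hS
  injOn_sources := by
    rintro _ _ ⟨d, ps, S, -, -, -, he⟩
    obtain ⟨rfl, rfl⟩ := Prod.mk.inj he
    rintro _ hx _ hy hxy
    obtain ⟨x, -, rfl⟩ := Finset.mem_image.mp hx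
    obtain ⟨y, -, rfl⟩ := Finset.mem_image.mp hy
    simp only [List.headD_cons] at hxy
    rw [hxy]
  exists_edge_of_mem_edges := by
    rintro (_ | ⟨d, ps⟩) ⟨hp, hl⟩ S hS
    · exact absurd rfl hp.1
    · exact ⟨_, d, ps, S, hp, hl, hS, rfl⟩

end Unravel

end ProofHypergraph

/-- Every recursive measure on proofs is invariant under tree
unraveling: if `P` is a proof for `T ⊨ η` (with sink `v`) and `P_T = unravel P v` is
its unraveling into a tree starting at the sink, then `m(P) = m(P_T)`.
Here `mP` and `mT` are the instances of the recursive measure, determined by the same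
leaf and edge functions, on hypergraphs over the two vertex types. -/
theorem recursive_measure_unraveling_invariant {V L : Type} [DecidableEq V] [DecidableEq L]
    (ent : Set L → L → Prop) (T : Set L) (η : L)
    (leafm : L → NNRat) (edgem : Finset L × L → Multiset NNRat → NNRat)
    (mP : ProofHypergraph V L → NNRat) (mT : ProofHypergraph (List V) L → NNRat)
    (hmP : ProofHypergraph.RecursiveOn mP leafm edgem)
    (hmT : ProofHypergraph.RecursiveOn mT leafm edgem)
    (P : ProofHypergraph V L) (v : V)
    (hproof : P.IsProofFor ent T η v) :
    mP P = mT (P.unravel v) :=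
  (hmT.eq_of_isFibration hmP (ProofHypergraph.unravel_isProofOf hproof.1) hproof.1
    ProofHypergraph.isFibration_headD_unravel).symm
end

section
/- The unraveling of an acyclic hypergraph H at a vertex v is a tree, and the map sending each path to its starting vertex (and v to itself) is a hypergraph homomorphism from the unraveling to H. -/
/-- A (finite, directed, labeled) hypergraph: vertices, hyperedges `(S,d)` with a finite
source set `S` and target `d`, and a vertex labeling function. -/
structure LHypergraph (V : Type) (L : Type) where
  verts : Set V
  edges : Set (Finset V × V)
  labl : V → L

namespace LHypergraph

variable {V L : Type}

/-- Every hyperedge has its sources and target among the vertices. -/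
def WellFormed (H : LHypergraph V L) : Prop :=
  ∀ e ∈ H.edges, (e.1 : Set V) ⊆ H.verts ∧ e.2 ∈ H.verts

/-- One step along a hyperedge: `u` is a source of a hyperedge with target `w`. -/
def Step (H : LHypergraph V L) (u w : V) : Prop :=
  ∃ S : Finset V, (S, w) ∈ H.edges ∧ u ∈ S

/-- A path, represented by its (nonempty) list of vertices `d₀, d₁, …, d_q`;
its length is `q = p.length - 1`. -/
def IsPathList (H : LHypergraph V L) (p : List V) : Prop :=
  p ≠ [] ∧ p.Chain' H.Step ∧ ∀ x ∈ p, x ∈ H.verts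

/-- `u` reaches `w` via a path of positive length. -/
def Reaches (H : LHypergraph V L) (u w : V) : Prop :=
  ∃ p : List V, H.IsPathList p ∧ p.head? = some u ∧ p.getLast? = some w ∧ 2 ≤ p.length

/-- Acyclic: no path of positive length from a vertex to itself. -/
def Acyclic (H : LHypergraph V L) : Prop := ∀ u : V, ¬ H.Reaches u u

/-- A sink: a vertex occurring in the source set of no hyperedge. -/
def IsSink (H : LHypergraph V L) (s : V) : Prop :=
  s ∈ H.verts ∧ ∀ e ∈ H.edges, s ∉ e.1

/-- A leaf: a vertex with no incoming hyperedge. -/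
def IsLeaf (H : LHypergraph V L) (w : V) : Prop :=
  w ∈ H.verts ∧ ∀ e ∈ H.edges, e.2 ≠ w

/-- Every vertex has at most one incoming hyperedge. -/
def AtMostOneIn (H : LHypergraph V L) : Prop :=
  ∀ S₁ S₂ : Finset V, ∀ d : V, (S₁, d) ∈ H.edges → (S₂, d) ∈ H.edges → S₁ = S₂

/-- A (structural) proof with sink `v`: a finite, well-formed, acyclic hypergraph with
at most one incoming hyperedge per vertex and exactly one sink, namely `v`. -/
def IsProofOf (H : LHypergraph V L) (v : V) : Prop :=
  H.WellFormed ∧ H.verts.Finite ∧ H.Acyclic ∧ H.AtMostOneIn ∧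
  H.IsSink v ∧ ∀ w : V, H.IsSink w → w = v

/-- A proof for `T ⊨ η` w.r.t. a consequence relation `ent`: a grounded
(leaves labeled by theory sentences) and sound (each hyperedge is a valid inference)
proof whose unique sink `v` is labeled `η`. -/
def IsProofFor (ent : Set L → L → Prop) (T : Set L) (η : L)
    (H : LHypergraph V L) (v : V) : Prop :=
  H.IsProofOf v ∧ H.labl v = η ∧
  (∀ w : V, H.IsLeaf w → H.labl w ∈ T) ∧
  ∀ e ∈ H.edges, ent (H.labl '' (e.1 : Set V)) (H.labl e.2)

/-- Subgraph relation. -/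
def IsSubgraph (H' H : LHypergraph V L) : Prop :=
  H'.verts ⊆ H.verts ∧ H'.edges ⊆ H.edges ∧ H'.labl = H.labl

/-- The subproof of `H` with sink `v`: the restriction of `H` to `v` together with all
vertices having a path to `v`, with all hyperedges of `H` among those vertices. -/
def subproofAt (H : LHypergraph V L) (v : V) : LHypergraph V L where
  verts := {w | w ∈ H.verts ∧ (w = v ∨ H.Reaches w v)}
  edges := {e | e ∈ H.edges ∧ (e.2 = v ∨ H.Reaches e.2 v)}
  labl := H.labl

end LHypergraph

namespace LHypergraph

/-- The unraveling of a hypergraph `H` at a vertex `v`: vertices are the paths of `H`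
ending in `v` (the path `[v]` of length 0 represents `v` itself); there is a hyperedge
from the set of one-step extensions `{d' :: p | d' ∈ S}` to `p` whenever `(S, d)` is a
hyperedge of `H` into the first vertex `d` of `p`; labels are inherited from the
starting vertices of paths. -/
def unravel {V L : Type} [DecidableEq V] (H : LHypergraph V L) (v : V) :
    LHypergraph (List V) L where
  verts := {p | H.IsPathList p ∧ p.getLast? = some v}
  edges := {e | ∃ (d : V) (ps : List V) (S : Finset V),
      H.IsPathList (d :: ps) ∧ (d :: ps).getLast? = some v ∧ (S, d) ∈ H.edges ∧
      e = (S.image (fun u => u :: d :: ps), d :: ps)}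
  labl := fun p => H.labl (p.headD v)

end LHypergraph

namespace LHypergraph

/-- A homomorphism of labeled hypergraphs: a vertex map preserving vertices,
hyperedges and labels. -/
def IsHom {V V' L : Type} [DecidableEq V'] (h : V → V')
    (H : LHypergraph V L) (H' : LHypergraph V' L) : Prop :=
  (∀ x ∈ H.verts, h x ∈ H'.verts) ∧
  (∀ e ∈ H.edges, (e.1.image h, h e.2) ∈ H'.edges) ∧
  ∀ x ∈ H.verts, H'.labl (h x) = H.labl x

end LHypergraph

namespace LHypergraph

/-- A tree with root `t`: `t` is reachable from every other vertex by exactly one path. -/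
def IsTree {A L : Type} (H : LHypergraph A L) (t : A) : Prop :=
  t ∈ H.verts ∧ ∀ w ∈ H.verts, w ≠ t →
    ∃! p : List A, H.IsPathList p ∧ p.head? = some w ∧ p.getLast? = some t

end LHypergraph

/-! A path in the unraveling drops one vertex from the front at each step, so the only path
from a vertex `w` to the root `[v]` is the list `w.tails.dropLast` of nonempty suffixes of `w`.
The projection `p ↦ p.headD v` maps each unraveled hyperedge onto the hyperedge of `H` it was
copied from. -/

namespace List

variable {α : Type*}

theorem dropLast_tails_cons (a : α) (l : List α) :
    (a :: l).tails.dropLast = (a :: l) :: l.tails.dropLast := by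
  rw [tails_cons, dropLast_cons_of_ne_nil (by cases l <;> simp)]

theorem head?_dropLast_tails {w : List α} (hw : w ≠ []) : w.tails.dropLast.head? = some w := by
  obtain ⟨a, l, rfl⟩ := exists_cons_of_ne_nil hw
  rw [dropLast_tails_cons, head?_cons]

theorem getLast?_dropLast_tails (w : List α) :
    w.tails.dropLast.getLast? = w.getLast?.map ([·]) := by
  induction w with
  | nil => rfl
  | cons a l ih =>
    cases l with
    | nil => rfl
    | cons b l => rw [dropLast_tails_cons, dropLast_tails_cons, getLast?_cons_cons,
        ← dropLast_tails_cons, ih, getLast?_cons_cons]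

theorem mem_dropLast_tails {s w : List α} : s ∈ w.tails.dropLast ↔ s <:+ w ∧ s ≠ [] := by
  induction w with
  | nil => simp [suffix_nil]
  | cons a l ih =>
    rw [dropLast_tails_cons, mem_cons, ih, suffix_cons_iff]
    constructor
    · rintro (rfl | ⟨hs, hne⟩)
      · simp
      · exact ⟨Or.inr hs, hne⟩
    · rintro ⟨hs | hs, hne⟩
      · exact Or.inl hs
      · exact Or.inr ⟨hs, hne⟩

theorem isChain_dropLast_tails (w : List α) :
    w.tails.dropLast.IsChain (fun a b => ∃ x, a = x :: b) := by
  induction w with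
  | nil => simp
  | cons a l ih =>
    cases l with
    | nil => simp
    | cons b l =>
      rw [dropLast_tails_cons, dropLast_tails_cons, isChain_cons_cons]
      exact ⟨⟨a, rfl⟩, by rwa [← dropLast_tails_cons]⟩

theorem eq_dropLast_tails_of_isChain {q : List (List α)} {w : List α} {y : α}
    (hq : q.IsChain (fun a b => ∃ x, a = x :: b)) (hhead : q.head? = some w)
    (hlast : q.getLast? = some [y]) : q = w.tails.dropLast := by
  induction q generalizing w with
  | nil => simp at hhead
  | cons c rest ih =>
    obtain rfl : c = w := by simpa using hhead
    cases rest with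
    | nil =>
      obtain rfl : c = [y] := by simpa using hlast
      rfl
    | cons d rest =>
      obtain ⟨⟨x, rfl⟩, hrest⟩ := isChain_cons_cons.mp hq
      rw [getLast?_cons_cons] at hlast
      rw [dropLast_tails_cons, ih hrest rfl hlast]

end List

namespace LHypergraph

variable {V L : Type} [DecidableEq V] {H : LHypergraph V L} {v : V}

theorem unravel_step_iff {q p : List V} :
    (H.unravel v).Step q p ↔
      p ∈ (H.unravel v).verts ∧ ∃ u, H.Step u (p.headD v) ∧ q = u :: p := by
  constructor
  · rintro ⟨_, ⟨d, ps, S, hpath, hlast, hSd, heq⟩, hq⟩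
    obtain ⟨rfl, rfl⟩ := Prod.mk.inj heq
    obtain ⟨u, hu, rfl⟩ := Finset.mem_image.mp hq
    exact ⟨⟨hpath, hlast⟩, u, ⟨S, hSd, hu⟩, rfl⟩
  · rintro ⟨⟨hpath, hlast⟩, u, ⟨S, hSd, hu⟩, rfl⟩
    obtain ⟨d, ps, rfl⟩ := List.exists_cons_of_ne_nil hpath.1
    exact ⟨_, ⟨d, ps, S, hpath, hlast, hSd, rfl⟩, Finset.mem_image_of_mem _ hu⟩

theorem mem_unravel_verts_of_suffix {s w : List V} (hw : w ∈ (H.unravel v).verts)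
    (hsw : s <:+ w) (hs : s ≠ []) : s ∈ (H.unravel v).verts := by
  obtain ⟨⟨-, hchain, hmem⟩, hlast⟩ := hw
  refine ⟨⟨hs, hchain.suffix hsw, fun x hx => hmem x (hsw.subset hx)⟩, ?_⟩
  rw [List.getLast?_eq_some_getLast hs, hsw.getLast hs, ← List.getLast?_eq_some_getLast]
  exact hlast

theorem unravel_step_cons {x : V} {p : List V} (hx : x :: p ∈ (H.unravel v).verts)
    (hp : p ≠ []) : (H.unravel v).Step (x :: p) p := by
  obtain ⟨d, ps, rfl⟩ := List.exists_cons_of_ne_nil hp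
  have hp' := mem_unravel_verts_of_suffix hx (List.suffix_cons _ _) hp
  exact unravel_step_iff.mpr ⟨hp', x, (List.isChain_cons_cons.mp hx.1.2.1).1, rfl⟩

theorem isPathList_unravel_dropLast_tails {w : List V} (hw : w ∈ (H.unravel v).verts) :
    (H.unravel v).IsPathList w.tails.dropLast := by
  have hmem : ∀ s ∈ w.tails.dropLast, s ∈ (H.unravel v).verts := fun s hs =>
    mem_unravel_verts_of_suffix hw (List.mem_dropLast_tails.mp hs).1
      (List.mem_dropLast_tails.mp hs).2
  refine ⟨fun h => by simpa [h] using List.head?_dropLast_tails hw.1.1, ?_, hmem⟩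
  refine (List.isChain_dropLast_tails w).imp_of_mem_imp ?_
  rintro a b ha hb ⟨x, rfl⟩
  exact unravel_step_cons (hmem _ ha) (List.mem_dropLast_tails.mp hb).2

theorem unravel_isTree (hv : v ∈ H.verts) : (H.unravel v).IsTree [v] := by
  refine ⟨⟨⟨List.cons_ne_nil _ _, List.isChain_singleton _, by simpa using hv⟩, rfl⟩,
    fun w hw _ => ?_⟩
  refine ⟨w.tails.dropLast, ⟨isPathList_unravel_dropLast_tails hw,
    List.head?_dropLast_tails hw.1.1, by rw [List.getLast?_dropLast_tails, hw.2]; rfl⟩, ?_⟩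
  rintro q ⟨hq, hhead, hlast⟩
  refine List.eq_dropLast_tails_of_isChain (hq.2.1.imp fun a b hab => ?_) hhead hlast
  obtain ⟨-, x, -, rfl⟩ := unravel_step_iff.mp hab
  exact ⟨x, rfl⟩

theorem isHom_headD_unravel :
    IsHom (fun p : List V => p.headD v) (H.unravel v) H := by
  refine ⟨?_, ?_, fun _ _ => rfl⟩
  · rintro p ⟨⟨hne, -, hmem⟩, -⟩
    obtain ⟨a, l, rfl⟩ := List.exists_cons_of_ne_nil hne
    exact hmem a List.mem_cons_self
  · rintro _ ⟨d, ps, S, -, -, hSd, rfl⟩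
    simpa [Finset.image_image, Function.comp_def] using hSd

end LHypergraph

theorem unravel_isTree_and_hom_general {V L : Type} [DecidableEq V]
    (H : LHypergraph V L) (v : V)
    (hv : v ∈ H.verts) :
    (H.unravel v).IsTree [v] ∧
    LHypergraph.IsHom (fun p : List V => p.headD v) (H.unravel v) H :=
  ⟨LHypergraph.unravel_isTree hv, LHypergraph.isHom_headD_unravel⟩

/-- The unraveling of an acyclic hypergraph `H` at a vertex `v` is a
tree (with root the length-0 path `[v]`), and the map sending each path to its starting
vertex (and `[v]` to `v`) is a hypergraph homomorphism from the unraveling to `H`. -/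
theorem unravel_isTree_and_hom {V L : Type} [DecidableEq V]
    (H : LHypergraph V L) (v : V)
    (hwf : H.WellFormed) (hfin : H.verts.Finite) (hacyc : H.Acyclic)
    (hv : v ∈ H.verts) :
    (H.unravel v).IsTree [v] ∧
    LHypergraph.IsHom (fun p : List V => p.headD v) (H.unravel v) H :=
  unravel_isTree_and_hom_general H v hv
end

section
/- If a proof P for T ⊨ η admits a homomorphism h into a derivation structure D, and each vertex of D has at most one label-equal copy (D contains no two vertices with the same label), then by iteratively replacing, for each pair v, v' of vertices of P with h(v) = h(v') such that there is a path from v to v' but not from v' to v, the subproof P_{v'} with the subproof P_v, one obtains after finitely many steps a proof P* with h(P*) ⊆ h(P) such that h(P*) is an acyclic subgraph of D in which every vertex has at most one incoming edge; hence h(P*) is a proof for T ⊨ η contained in D. -/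
namespace LHypergraph

/-- The homomorphic image `h(H)` of `H` under `h`, as a subhypergraph of the
target `D` (whose labeling it carries). -/
def himage {V V' L : Type} [DecidableEq V'] (h : V → V')
    (H : LHypergraph V L) (D : LHypergraph V' L) : LHypergraph V' L where
  verts := h '' H.verts
  edges := {e' | ∃ e ∈ H.edges, e' = (e.1.image h, h e.2)}
  labl := D.labl

end LHypergraph

/-!
Choose a rank on `P` that strictly increases along hyperedges (the number of vertices
reaching a vertex) and, in every fibre of `h`, a representative of minimal rank. Rebuild the
proof from the representative of its sink, redirecting every premise to the representative of
its fibre. Each redirected premise has rank strictly below the conclusion it feeds, so the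
result is again an acyclic proof, and since it only contains representatives, `h` is injective
on it; the injective image of a proof is a proof.
-/

theorem exists_rank_minimal_section {V V' : Type} [Nonempty V] (h : V → V') (r : V → ℕ)
    (A : Set V) : ∃ c : V' → V, ∀ s ∈ A, c (h s) ∈ A ∧ h (c (h s)) = h s ∧ r (c (h s)) ≤ r s := by
  have hmin : ∀ d : V', ∃ x : V, ∀ s ∈ A, h s = d → x ∈ A ∧ h x = d ∧ r x ≤ r s := by
    intro d
    by_cases hd : (A ∩ h ⁻¹' {d}).Nonempty
    · obtain ⟨x, ⟨hxA, hxd⟩, hx⟩ := (measure r).wf.has_min _ hd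
      exact ⟨x, fun s hs hsd => ⟨hxA, hxd, not_lt.1 (hx s ⟨hs, hsd⟩)⟩⟩
    · exact ⟨Classical.arbitrary V, fun s hs hsd => (hd ⟨s, hs, hsd⟩).elim⟩
  choose c hc using hmin
  exact ⟨c, fun s hs => hc (h s) s hs rfl⟩

namespace LHypergraph

variable {V V' L : Type}

def Grounded (T : Set L) (H : LHypergraph V L) : Prop :=
  ∀ w : V, H.IsLeaf w → H.labl w ∈ T

def Sound (ent : Set L → L → Prop) (H : LHypergraph V L) : Prop :=
  ∀ e ∈ H.edges, ent (H.labl '' (e.1 : Set V)) (H.labl e.2)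

def ancestors (H : LHypergraph V L) (x : V) : Set V :=
  {u | u ∈ H.verts ∧ H.Reaches u x}

section Paths

variable {H : LHypergraph V L} {u x w : V}

theorem WellFormed.mem_verts_of_step (hwf : H.WellFormed) (hs : H.Step u w) :
    u ∈ H.verts ∧ w ∈ H.verts := by
  obtain ⟨S, he, hu⟩ := hs
  exact ⟨(hwf _ he).1 hu, (hwf _ he).2⟩

theorem WellFormed.reaches_of_step (hwf : H.WellFormed) (hs : H.Step u w) : H.Reaches u w := by
  obtain ⟨hu, hw⟩ := hwf.mem_verts_of_step hs
  refine ⟨[u, w], ⟨by simp, List.isChain_pair.2 hs, ?_⟩, rfl, rfl, le_rfl⟩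
  simpa using And.intro hu hw

theorem Reaches.trans_step (hr : H.Reaches u x) (hs : H.Step x w) (hw : w ∈ H.verts) :
    H.Reaches u w := by
  obtain ⟨p, ⟨hne, hch, hmem⟩, hh, hl, hlen⟩ := hr
  refine ⟨p ++ [w], ⟨by simp, hch.append (List.isChain_singleton w) ?_, ?_⟩, ?_, ?_, ?_⟩
  · rintro a ha b hb
    simp_all
  · simpa [or_imp, forall_and] using And.intro hmem hw
  · rw [List.head?_append_of_ne_nil _ hne, hh]
  · simp
  · simp only [List.length_append, List.length_singleton]
    omega

theorem Reaches.lt_of_step_lt (r : V → ℕ) (hr : ∀ a b, H.Step a b → r a < r b)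
    (h : H.Reaches u w) : r u < r w := by
  obtain ⟨p, ⟨hne, hch, -⟩, hh, hl, hlen⟩ := h
  obtain ⟨a, q, rfl⟩ := List.exists_cons_of_ne_nil hne
  cases hh
  have hq : q ≠ [] := List.ne_nil_of_length_pos (by simp at hlen; omega)
  have hpw : (u :: q).Pairwise (fun a b => r a < r b) :=
    List.isChain_iff_pairwise.1 (hch.imp hr)
  rw [List.getLast?_eq_some_getLast (by simp), List.getLast_cons hq, Option.some.injEq] at hl
  exact hl ▸ List.rel_of_pairwise_cons hpw (List.getLast_mem hq)

theorem acyclic_of_step_lt (r : V → ℕ) (hr : ∀ a b, H.Step a b → r a < r b) : H.Acyclic :=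
  fun _ hu => lt_irrefl _ (hu.lt_of_step_lt r hr)

theorem ncard_ancestors_lt_of_step (hwf : H.WellFormed) (hfin : H.verts.Finite)
    (hac : H.Acyclic) (hs : H.Step u w) : (H.ancestors u).ncard < (H.ancestors w).ncard := by
  have hw := (hwf.mem_verts_of_step hs).2
  refine Set.ncard_lt_ncard ⟨fun a ha => ⟨ha.1, ha.2.trans_step hs hw⟩, fun hsub => ?_⟩
    (hfin.subset fun a ha => ha.1)
  exact hac u (hsub ⟨(hwf.mem_verts_of_step hs).1, hwf.reaches_of_step hs⟩).2

theorem Acyclic.of_step_map {H' : LHypergraph V' L} (hwf : H.WellFormed)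
    (hfin : H.verts.Finite) (hac : H.Acyclic) (g : V' → V)
    (hg : ∀ a b, H'.Step a b → H.Step (g a) (g b)) : H'.Acyclic :=
  acyclic_of_step_lt (fun a => (H.ancestors (g a)).ncard)
    fun a b hab => ncard_ancestors_lt_of_step hwf hfin hac (hg a b hab)

end Paths

inductive RedirectVerts (P : LHypergraph V L) (f : V → V) (v : V) : V → Prop
  | root : RedirectVerts P f v v
  | premise {S : Finset V} {x s : V} :
      RedirectVerts P f v x → (S, x) ∈ P.edges → s ∈ S → RedirectVerts P f v (f s)

/-- The replacements of subproofs `P_s` by `P_{f s}`, all performed at once: grow a proof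
downwards from `v`, deriving each vertex `x` by its hyperedge `(S, x)` in `P` with every
premise `s ∈ S` redirected to `f s`. -/
def redirect [DecidableEq V] (P : LHypergraph V L) (f : V → V) (v : V) : LHypergraph V L where
  verts := {x | RedirectVerts P f v x}
  edges := {e | ∃ S x, (S, x) ∈ P.edges ∧ RedirectVerts P f v x ∧ e = (S.image f, x)}
  labl := P.labl

section Redirect

variable [DecidableEq V] {P : LHypergraph V L} {f : V → V} {v : V}

theorem redirect_verts_subset (hwf : P.WellFormed) (hf : ∀ s ∈ P.verts, f s ∈ P.verts)
    (hv : v ∈ P.verts) : (redirect P f v).verts ⊆ P.verts := by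
  intro x hx
  induction hx with
  | root => exact hv
  | premise _ he hs => exact hf _ ((hwf _ he).1 hs)

theorem le_of_mem_redirect (r : V → ℕ) (hwf : P.WellFormed)
    (hr : ∀ a b, P.Step a b → r a < r b) (hfr : ∀ s ∈ P.verts, r (f s) ≤ r s) {x : V}
    (hx : x ∈ (redirect P f v).verts) : r x ≤ r v := by
  induction hx with
  | root => exact le_rfl
  | premise _ he hs ih =>
    exact ((hfr _ ((hwf _ he).1 hs)).trans_lt (hr _ _ ⟨_, he, hs⟩)).le.trans ih

theorem redirect_step_iff {a b : V} :
    (redirect P f v).Step a b ↔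
      ∃ S s, (S, b) ∈ P.edges ∧ b ∈ (redirect P f v).verts ∧ s ∈ S ∧ a = f s := by
  constructor
  · rintro ⟨_, ⟨S, x, he, hx, heq⟩, ha⟩
    obtain ⟨rfl, rfl⟩ := Prod.mk.inj heq
    obtain ⟨s, hs, rfl⟩ := Finset.mem_image.1 ha
    exact ⟨S, s, he, hx, hs, rfl⟩
  · rintro ⟨S, s, he, hb, hs, rfl⟩
    exact ⟨_, ⟨S, b, he, hb, rfl⟩, Finset.mem_image_of_mem f hs⟩

theorem lt_of_redirect_step (r : V → ℕ) (hwf : P.WellFormed)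
    (hr : ∀ a b, P.Step a b → r a < r b) (hfr : ∀ s ∈ P.verts, r (f s) ≤ r s) {a b : V}
    (hab : (redirect P f v).Step a b) : r a < r b := by
  obtain ⟨S, s, he, -, hs, rfl⟩ := redirect_step_iff.1 hab
  exact (hfr _ ((hwf _ he).1 hs)).trans_lt (hr _ _ ⟨_, he, hs⟩)

theorem redirect_wellFormed : (redirect P f v).WellFormed := by
  rintro _ ⟨S, x, he, hx, rfl⟩
  refine ⟨fun y hy => ?_, hx⟩
  obtain ⟨s, hs, rfl⟩ := Finset.mem_image.1 hy
  exact RedirectVerts.premise hx he hs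

theorem redirect_atMostOneIn (hone : P.AtMostOneIn) : (redirect P f v).AtMostOneIn := by
  rintro _ _ d ⟨S₁, x₁, he₁, -, heq₁⟩ ⟨S₂, x₂, he₂, -, heq₂⟩
  obtain ⟨rfl, rfl⟩ := Prod.mk.inj heq₁
  obtain ⟨rfl, rfl⟩ := Prod.mk.inj heq₂
  rw [hone _ _ _ he₁ he₂]

theorem redirect_isProofOf (r : V → ℕ) (hwf : P.WellFormed) (hfin : P.verts.Finite)
    (hone : P.AtMostOneIn) (hr : ∀ a b, P.Step a b → r a < r b)
    (hf : ∀ s ∈ P.verts, f s ∈ P.verts) (hfr : ∀ s ∈ P.verts, r (f s) ≤ r s)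
    (hv : v ∈ P.verts) : (redirect P f v).IsProofOf v := by
  have hstep {a b : V} (hab : (redirect P f v).Step a b) : r a < r b :=
    lt_of_redirect_step r hwf hr hfr hab
  refine ⟨redirect_wellFormed, hfin.subset (redirect_verts_subset hwf hf hv),
    acyclic_of_step_lt r fun a b => hstep, redirect_atMostOneIn hone,
    ⟨RedirectVerts.root, fun e he hve => ?_⟩, fun w ⟨hw, hsink⟩ => ?_⟩
  · have hlt := hstep ⟨e.1, he, hve⟩
    exact hlt.not_ge (le_of_mem_redirect r hwf hr hfr (redirect_wellFormed e he).2)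
  · cases hw with
    | root => rfl
    | premise hx he hs =>
      exact (hsink _ ⟨_, _, he, hx, rfl⟩ (Finset.mem_image_of_mem f hs)).elim

theorem Grounded.redirect {T : Set L} (hP : P.Grounded T) (hwf : P.WellFormed)
    (hf : ∀ s ∈ P.verts, f s ∈ P.verts) (hv : v ∈ P.verts) : (redirect P f v).Grounded T :=
  fun w ⟨hw, hleaf⟩ => hP w ⟨redirect_verts_subset hwf hf hv hw,
    fun e he hew => hleaf _ ⟨e.1, w, hew ▸ he, hw, rfl⟩ rfl⟩

theorem Sound.redirect {ent : Set L → L → Prop} (hP : P.Sound ent) (hwf : P.WellFormed)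
    (hfl : ∀ s ∈ P.verts, P.labl (f s) = P.labl s) : (redirect P f v).Sound ent := by
  rintro _ ⟨S, x, he, -, rfl⟩
  have hlabl : P.labl '' (S.image f : Set V) = P.labl '' (S : Set V) := by
    rw [Finset.coe_image, Set.image_image]
    exact Set.image_congr fun s hs => hfl s ((hwf _ he).1 hs)
  show ent (P.labl '' _) (P.labl x)
  rw [hlabl]
  exact hP _ he

theorem injOn_redirect {h : V → V'} {c : V' → V} (hwf : P.WellFormed)
    (hc : ∀ s ∈ P.verts, h (c (h s)) = h s) (hv : c (h v) = v) :
    Set.InjOn h (redirect P (c ∘ h) v).verts := by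
  have hfix {x : V} (hx : x ∈ (redirect P (c ∘ h) v).verts) : c (h x) = x := by
    induction hx with
    | root => exact hv
    | premise _ he hs => exact congrArg c (hc _ ((hwf _ he).1 hs))
  intro x hx y hy hxy
  rw [← hfix hx, ← hfix hy, hxy]

variable [DecidableEq V'] {h : V → V'}

theorem isHom_redirect {D : LHypergraph V' L} (hhom : IsHom h P D) (hwf : P.WellFormed)
    (hf : ∀ s ∈ P.verts, f s ∈ P.verts) (hfh : ∀ s ∈ P.verts, h (f s) = h s)
    (hv : v ∈ P.verts) : IsHom h (redirect P f v) D := by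
  have hsub := redirect_verts_subset hwf hf hv
  refine ⟨fun x hx => hhom.1 x (hsub hx), ?_, fun x hx => hhom.2.2 x (hsub hx)⟩
  rintro _ ⟨S, x, he, -, rfl⟩
  have himage : (S.image f).image h = S.image h := by
    rw [Finset.image_image]
    exact Finset.image_congr fun s hs => hfh s ((hwf _ he).1 hs)
  simpa only [himage] using hhom.2.1 _ he

theorem himage_redirect_isSubgraph (D : LHypergraph V' L) (hwf : P.WellFormed)
    (hf : ∀ s ∈ P.verts, f s ∈ P.verts) (hfh : ∀ s ∈ P.verts, h (f s) = h s)
    (hv : v ∈ P.verts) : (himage h (redirect P f v) D).IsSubgraph (himage h P D) := by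
  refine ⟨Set.image_mono (redirect_verts_subset hwf hf hv), ?_, rfl⟩
  rintro _ ⟨_, ⟨S, x, he, -, rfl⟩, rfl⟩
  refine ⟨_, he, ?_⟩
  rw [Finset.image_image]
  exact congrArg (·, h x) (Finset.image_congr fun s hs => hfh s ((hwf _ he).1 hs))

end Redirect

section Image

variable [DecidableEq V'] {h : V → V'} {Q : LHypergraph V L} {D : LHypergraph V' L}

theorem exists_step_of_himage_step {a' b' : V'} (hs : (himage h Q D).Step a' b') :
    ∃ a b, Q.Step a b ∧ h a = a' ∧ h b = b' := by
  obtain ⟨_, ⟨⟨S, x⟩, he, heq⟩, ha'⟩ := hs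
  obtain ⟨rfl, rfl⟩ := Prod.mk.inj heq
  obtain ⟨a, ha, rfl⟩ := Finset.mem_image.1 ha'
  exact ⟨a, x, ⟨S, he, ha⟩, rfl, rfl⟩

theorem IsHom.himage_isSubgraph (hhom : IsHom h Q D) : (himage h Q D).IsSubgraph D :=
  ⟨Set.image_subset_iff.2 hhom.1, fun _ ⟨e, he, hee⟩ => hee ▸ hhom.2.1 e he, rfl⟩

theorem IsProofOf.himage {v : V} (hQ : Q.IsProofOf v) (hinj : Set.InjOn h Q.verts) :
    (himage h Q D).IsProofOf (h v) := by
  obtain ⟨hwf, hfin, hac, hone, ⟨hv, hvsink⟩, huniq⟩ := hQ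
  have : Nonempty V := ⟨v⟩
  refine ⟨?_, hfin.image h, ?_, ?_, ⟨⟨v, hv, rfl⟩, ?_⟩, ?_⟩
  · rintro _ ⟨e, he, rfl⟩
    refine ⟨?_, e.2, (hwf e he).2, rfl⟩
    rw [Finset.coe_image]
    exact Set.image_mono (hwf e he).1
  · -- steps of the image lift to steps of `Q` along the inverse of `h` on `Q.verts`
    refine Acyclic.of_step_map hwf hfin hac (Function.invFunOn h Q.verts) fun a' b' hs => ?_
    obtain ⟨a, b, hab, rfl, rfl⟩ := exists_step_of_himage_step hs
    obtain ⟨ha, hb⟩ := hwf.mem_verts_of_step hab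
    rwa [hinj.leftInvOn_invFunOn ha, hinj.leftInvOn_invFunOn hb]
  · rintro _ _ d ⟨⟨A₁, x₁⟩, he₁, heq₁⟩ ⟨⟨A₂, x₂⟩, he₂, heq₂⟩
    obtain ⟨rfl, rfl⟩ := Prod.mk.inj heq₁
    obtain ⟨rfl, hx⟩ := Prod.mk.inj heq₂
    obtain rfl := hinj (hwf _ he₁).2 (hwf _ he₂).2 hx
    rw [hone _ _ _ he₁ he₂]
  · rintro _ ⟨⟨S, x⟩, he, rfl⟩ hmem
    obtain ⟨s, hs, hsv⟩ := Finset.mem_image.1 hmem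
    obtain rfl := hinj ((hwf _ he).1 hs) hv hsv
    exact hvsink _ he hs
  · rintro _ ⟨⟨w, hw, rfl⟩, hsink⟩
    exact congrArg h
      (huniq w ⟨hw, fun e he hwe => hsink _ ⟨e, he, rfl⟩ (Finset.mem_image_of_mem h hwe)⟩)

theorem Grounded.himage {T : Set L} (hQ : Q.Grounded T) (hhom : IsHom h Q D) :
    (himage h Q D).Grounded T := by
  rintro _ ⟨⟨w, hw, rfl⟩, hleaf⟩
  show D.labl (h w) ∈ T
  rw [hhom.2.2 w hw]
  exact hQ w ⟨hw, fun e he hew => hleaf _ ⟨e, he, rfl⟩ (congrArg h hew)⟩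

theorem Sound.himage {ent : Set L → L → Prop} (hQ : Q.Sound ent) (hwf : Q.WellFormed)
    (hhom : IsHom h Q D) : (himage h Q D).Sound ent := by
  rintro _ ⟨⟨S, x⟩, he, rfl⟩
  have hlabl : D.labl '' (S.image h : Set V') = Q.labl '' (S : Set V) := by
    rw [Finset.coe_image, Set.image_image]
    exact Set.image_congr fun s hs => hhom.2.2 s ((hwf _ he).1 hs)
  show ent (D.labl '' _) (D.labl (h x))
  rw [hlabl, hhom.2.2 x (hwf _ he).2]
  exact hQ _ he

theorem IsProofFor.himage {ent : Set L → L → Prop} {T : Set L} {η : L} {v : V}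
    (hQ : Q.IsProofFor ent T η v) (hhom : IsHom h Q D) (hinj : Set.InjOn h Q.verts) :
    (himage h Q D).IsProofFor ent T η (h v) := by
  obtain ⟨hwf, -, -, -, ⟨hv, -⟩, -⟩ := hQ.1
  obtain ⟨hproof, hlabl, hground, hsound⟩ := hQ
  exact ⟨hproof.himage hinj, (hhom.2.2 v hv).trans hlabl, Grounded.himage hground hhom,
    Sound.himage hsound hwf hhom⟩

end Image

end LHypergraph

theorem homomorphic_image_contains_proof_general {V V' L : Type} [DecidableEq V']
    (ent : Set L → L → Prop) (T : Set L) (η : L)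
    (P : LHypergraph V L) (vP : V) (hP : P.IsProofFor ent T η vP)
    (D : LHypergraph V' L)
    (h : V → V') (hhom : LHypergraph.IsHom h P D) :
    ∃ (Pstar : LHypergraph V L) (vstar : V),
      Pstar.verts ⊆ P.verts ∧
      Pstar.IsProofFor ent T η vstar ∧
      LHypergraph.IsHom h Pstar D ∧
      (LHypergraph.himage h Pstar D).IsSubgraph (LHypergraph.himage h P D) ∧
      (LHypergraph.himage h Pstar D).IsSubgraph D ∧
      (LHypergraph.himage h Pstar D).IsProofFor ent T η (h vstar) := by
  classical
  obtain ⟨⟨hwf, hfin, hac, hone, ⟨hvP, -⟩, -⟩, hlabl, hground, hsound⟩ := hP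
  have : Nonempty V := ⟨vP⟩
  obtain ⟨c, hc⟩ := exists_rank_minimal_section h (fun x => (P.ancestors x).ncard) P.verts
  set f := c ∘ h
  have hf (s) (hs : s ∈ P.verts) : f s ∈ P.verts := (hc s hs).1
  have hfh (s) (hs : s ∈ P.verts) : h (f s) = h s := (hc s hs).2.1
  have hfl (s) (hs : s ∈ P.verts) : P.labl (f s) = P.labl s := by
    rw [← hhom.2.2 _ (hf s hs), hfh s hs, hhom.2.2 s hs]
  have hv := hf vP hvP
  have hrank (a b) : P.Step a b → (P.ancestors a).ncard < (P.ancestors b).ncard :=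
    LHypergraph.ncard_ancestors_lt_of_step hwf hfin hac
  have hQ : (LHypergraph.redirect P f (f vP)).IsProofFor ent T η (f vP) :=
    ⟨LHypergraph.redirect_isProofOf _ hwf hfin hone hrank hf (fun s hs => (hc s hs).2.2) hv,
      (hfl vP hvP).trans hlabl, LHypergraph.Grounded.redirect hground hwf hf hv,
      LHypergraph.Sound.redirect hsound hwf hfl⟩
  have hQhom := LHypergraph.isHom_redirect hhom hwf hf hfh hv
  have hinj : Set.InjOn h (LHypergraph.redirect P f (f vP)).verts :=
    LHypergraph.injOn_redirect hwf (fun s hs => (hc s hs).2.1) (congrArg c (hfh vP hvP))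
  exact ⟨_, _, LHypergraph.redirect_verts_subset hwf hf hv, hQ, hQhom,
    LHypergraph.himage_redirect_isSubgraph D hwf hf hfh hv, hQhom.himage_isSubgraph,
    hQ.himage hQhom hinj⟩

/-- If a proof `P` for `T ⊨ η` admits a homomorphism `h` into a
derivation structure `D` containing no two vertices with the same label, then
(by iteratively replacing subproofs `P_{v'}` by subproofs `P_v` for merged vertices
`h v = h v'` with a path from `v` to `v'` but not back) one obtains a proof `P*` for
`T ⊨ η`, using a subset of the vertices of `P`, such that `h(P*) ⊆ h(P)` and `h(P*)`
is an acyclic subgraph of `D` with at most one incoming hyperedge per vertex; hence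
`h(P*)` is a proof for `T ⊨ η` contained in `D`. -/
theorem homomorphic_image_contains_proof {V V' L : Type} [DecidableEq V']
    (ent : Set L → L → Prop) (T : Set L) (η : L)
    (P : LHypergraph V L) (vP : V) (hP : P.IsProofFor ent T η vP)
    (D : LHypergraph V' L)
    (hDwf : D.WellFormed)
    (hDground : ∀ w : V', D.IsLeaf w → D.labl w ∈ T)
    (hDsound : ∀ e ∈ D.edges, ent (D.labl '' (e.1 : Set V')) (D.labl e.2))
    (hdistinct : ∀ u ∈ D.verts, ∀ w ∈ D.verts, D.labl u = D.labl w → u = w)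
    (h : V → V') (hhom : LHypergraph.IsHom h P D) :
    ∃ (Pstar : LHypergraph V L) (vstar : V),
      Pstar.verts ⊆ P.verts ∧
      Pstar.IsProofFor ent T η vstar ∧
      LHypergraph.IsHom h Pstar D ∧
      (LHypergraph.himage h Pstar D).IsSubgraph (LHypergraph.himage h P D) ∧
      (LHypergraph.himage h Pstar D).IsSubgraph D ∧
      (LHypergraph.himage h Pstar D).IsProofFor ent T η (h vstar) :=
  homomorphic_image_contains_proof_general ent T η P vP hP D h hhom
end
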